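/- Fix n ≥ 1 and 0 ≤ k ≤ n, and let M_k := {Z ∈ ℝ^{n×n} : rank Z = k}. Let X ∈ ℝ^{n×n} be a matrix whose metric projection onto M_k (with respect to the Frobenius norm) is a singleton {Y}. Then the orthogonal projection, with respect to the trace inner product, of X^∓ := (X⁺)ᵀ onto the tangent space T_Y M_k equals Y^∓ := (Y⁺)ᵀ; here T_Y M_k is the linear span of the tangent cone to M_k at Y, and Z⁺ denotes the Moore–Penrose inverse of a matrix Z. -/

import Mathlib

open Matrix

noncomputable section

/-- The Euclidean norm on `ℝⁿ` (vectors as functions). -/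
def vnorm {n : ℕ} (x : Fin n → ℝ) : ℝ := Real.sqrt (∑ i, x i ^ 2)

/-- Euclidean distance from a point to a set in `ℝⁿ`. -/
def vdistSet {n : ℕ} (x : Fin n → ℝ) (Q : Set (Fin n → ℝ)) : ℝ :=
  sInf ((fun y => vnorm (x - y)) '' Q)

/-- The Frobenius norm of a real matrix. -/
def frobNorm {n m : ℕ} (A : Matrix (Fin n) (Fin m) ℝ) : ℝ :=
  Real.sqrt (∑ i, ∑ j, A i j ^ 2)

/-- Frobenius distance from a matrix to a set of matrices. -/
def frobDistSet {n m : ℕ} (X : Matrix (Fin n) (Fin m) ℝ)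
    (S : Set (Matrix (Fin n) (Fin m) ℝ)) : ℝ :=
  sInf ((fun Z => frobNorm (X - Z)) '' S)

/-- The metric projection (set of nearest points) for the Frobenius norm on matrices. -/
def mprojSet {n m : ℕ} (S : Set (Matrix (Fin n) (Fin m) ℝ)) (X : Matrix (Fin n) (Fin m) ℝ) :
    Set (Matrix (Fin n) (Fin m) ℝ) :=
  {Y ∈ S | frobNorm (X - Y) = frobDistSet X S}

/-- `B` is the Moore–Penrose inverse of `A` (the four Penrose equations). -/
def IsMoorePenroseInv {n : ℕ} (A B : Matrix (Fin n) (Fin n) ℝ) : Prop :=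
  A * B * A = A ∧ B * A * B = B ∧ (A * B)ᵀ = A * B ∧ (B * A)ᵀ = B * A

/-- The tangent space of a set `S` of matrices at `Y`: the linear span of the tangent cone
(the topology of entrywise convergence coincides with the Frobenius-norm topology). -/
def matTangentSp {n : ℕ} (S : Set (Matrix (Fin n) (Fin n) ℝ)) (Y : Matrix (Fin n) (Fin n) ℝ) :
    Submodule ℝ (Matrix (Fin n) (Fin n) ℝ) :=
  Submodule.span ℝ (tangentConeAt ℝ S Y)

/-!
Moving the nearest point `Y` along the curves `Y (1 + t M)` and `(1 + t N) Y`, which keep its rank,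
gives the first-order conditions `Yᵀ (X - Y) = 0` and `(X - Y) Yᵀ = 0`; combined with the Penrose
equations they yield `Y X⁺ = Y Y⁺` and `X⁺ Y = Y⁺ Y`, i.e. `E := X⁺ - Y⁺` satisfies
`E = (1 - Y⁺ Y) E (1 - Y Y⁺)`. On the other hand, if `Y + D` has the rank of `Y`, then
`(1 - Y Y⁺) D (1 - Y⁺ Y)` is quadratic in `D` (it factors through a generalized inverse of
`Y Y⁺ (Y + D) Y⁺ Y`), so every tangent vector `W` satisfies `(1 - Y Y⁺) W (1 - Y⁺ Y) = 0`, and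
`tr (E W) = 0` follows by cyclicity of the trace. Finally `Y⁺ᵀ = Y (Y⁺ Y⁺ᵀ)` is itself tangent.
-/

open Filter Topology

theorem trace_transpose_mul_self_eq_zero_iff {m n : Type*} [Fintype m] [Fintype n]
    {A : Matrix m n ℝ} : trace (Aᵀ * A) = 0 ↔ A = 0 := by
  simpa using trace_conjTranspose_mul_self_eq_zero_iff (A := A)

section FirstOrder

variable {m n : ℕ}

theorem frobNorm_sq (A : Matrix (Fin m) (Fin n) ℝ) : frobNorm A ^ 2 = trace (Aᵀ * A) := by
  rw [frobNorm, Real.sq_sqrt (by positivity), Finset.sum_comm]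
  simp [trace, mul_apply, sq]

theorem frobNorm_sub_smul_sq (R B : Matrix (Fin m) (Fin n) ℝ) (t : ℝ) :
    frobNorm (R - t • B) ^ 2 =
      trace (Rᵀ * R) - 2 * t * trace (Bᵀ * R) + t ^ 2 * trace (Bᵀ * B) := by
  have hsymm : trace (Rᵀ * B) = trace (Bᵀ * R) := by
    rw [← trace_transpose, transpose_mul, transpose_transpose]
  rw [frobNorm_sq, transpose_sub, transpose_smul]
  simp only [Matrix.sub_mul, Matrix.mul_sub, Matrix.smul_mul, Matrix.mul_smul, trace_sub,
    trace_smul, hsymm, smul_eq_mul]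
  ring

theorem trace_transpose_mul_eq_zero_of_isLocalMin {R B : Matrix (Fin m) (Fin n) ℝ}
    (h : IsLocalMin (fun t : ℝ => frobNorm (R - t • B)) 0) : trace (Bᵀ * R) = 0 := by
  have hsq : IsLocalMin (fun t : ℝ => frobNorm (R - t • B) ^ 2) 0 :=
    h.mono fun t ht => pow_le_pow_left₀ (Real.sqrt_nonneg _) ht 2
  have hderiv : HasDerivAt (fun t : ℝ => frobNorm (R - t • B) ^ 2) (-2 * trace (Bᵀ * R)) 0 := by
    have hpoly := ((((hasDerivAt_id (0 : ℝ)).const_mul 2).mul_const (trace (Bᵀ * R))).const_sub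
      (trace (Rᵀ * R))).add ((hasDerivAt_pow 2 (0 : ℝ)).mul_const (trace (Bᵀ * B)))
    refine (hpoly.congr_deriv (by norm_num)).congr_of_eventuallyEq (.of_forall fun t => ?_)
    simp only [frobNorm_sub_smul_sq, id, Pi.add_apply]
  simpa using hsq.hasDerivAt_eq_zero hderiv

theorem frobNorm_sub_le_of_mem_mprojSet {S : Set (Matrix (Fin m) (Fin n) ℝ)}
    {X Y Z : Matrix (Fin m) (Fin n) ℝ} (hY : Y ∈ mprojSet S X) (hZ : Z ∈ S) :
    frobNorm (X - Y) ≤ frobNorm (X - Z) := by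
  rw [hY.2]
  exact csInf_le ⟨0, by rintro _ ⟨_, -, rfl⟩; exact Real.sqrt_nonneg _⟩ ⟨Z, hZ, rfl⟩

theorem trace_transpose_mul_sub_eq_zero_of_mem_mprojSet {S : Set (Matrix (Fin m) (Fin n) ℝ)}
    {X Y B : Matrix (Fin m) (Fin n) ℝ} (hY : Y ∈ mprojSet S X)
    (hB : ∀ᶠ t in 𝓝 (0 : ℝ), Y + t • B ∈ S) : trace (Bᵀ * (X - Y)) = 0 :=
  trace_transpose_mul_eq_zero_of_isLocalMin <| hB.mono fun t ht => by
    simpa [sub_sub] using frobNorm_sub_le_of_mem_mprojSet hY ht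

end FirstOrder

section RankStability

variable {ι : Type*} [Fintype ι] [DecidableEq ι]

theorem eventually_isUnit_det_of_tendsto_one {α : Type*} {l : Filter α} {A : α → Matrix ι ι ℝ}
    (h : Tendsto A l (𝓝 1)) : ∀ᶠ a in l, IsUnit (A a).det := by
  have hdet : Tendsto (fun a => (A a).det) l (𝓝 1) := by
    simpa [Function.comp_def] using (continuous_id.matrix_det.tendsto 1).comp h
  exact (hdet.eventually_ne one_ne_zero).mono fun a ha => isUnit_iff_ne_zero.mpr ha

theorem eventually_isUnit_det_one_add_smul (M : Matrix ι ι ℝ) :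
    ∀ᶠ t in 𝓝 (0 : ℝ), IsUnit (1 + t • M).det :=
  eventually_isUnit_det_of_tendsto_one <| by
    simpa using (tendsto_const_nhds (x := (1 : Matrix ι ι ℝ))).add
      ((tendsto_id (x := 𝓝 (0 : ℝ))).smul_const M)

theorem eventually_rank_add_smul_self_mul (Y M : Matrix ι ι ℝ) :
    ∀ᶠ t in 𝓝 (0 : ℝ), (Y + t • (Y * M)).rank = Y.rank :=
  (eventually_isUnit_det_one_add_smul M).mono fun t ht => by
    rw [← rank_mul_eq_left_of_isUnit_det _ Y ht, Matrix.mul_add, Matrix.mul_one, mul_smul_comm]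

theorem eventually_rank_add_smul_mul_self (Y M : Matrix ι ι ℝ) :
    ∀ᶠ t in 𝓝 (0 : ℝ), (Y + t • (M * Y)).rank = Y.rank :=
  (eventually_isUnit_det_one_add_smul M).mono fun t ht => by
    rw [← rank_mul_eq_right_of_isUnit_det _ Y ht, Matrix.add_mul, Matrix.one_mul, smul_mul_assoc]

theorem mul_mem_tangentConeAt_rank_eq (Y M : Matrix ι ι ℝ) :
    Y * M ∈ tangentConeAt ℝ {Z | Z.rank = Y.rank} Y :=
  mem_tangentConeAt_of_add_smul_mem (l := 𝓝[≠] 0) tendsto_id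
    ((eventually_rank_add_smul_self_mul Y M).filter_mono nhdsWithin_le_nhds)

end RankStability

section Factorization

variable {K : Type*} [Field K] {l m n : Type*} [Fintype l] [Fintype n]

theorem exists_eq_mul_of_range_mulVecLin_le [DecidableEq n] {A : Matrix m n K}
    {B : Matrix m l K} (h : LinearMap.range A.mulVecLin ≤ LinearMap.range B.mulVecLin) :
    ∃ N : Matrix l n K, A = B * N := by
  choose v hv using fun j => h (LinearMap.mem_range_self A.mulVecLin (Pi.single j 1))
  refine ⟨(Matrix.of v)ᵀ, Matrix.ext fun i j => ?_⟩
  have := congrFun (hv j) i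
  simp only [mulVecLin_apply, mulVec_single_one] at this
  simpa [mul_apply, mulVec, dotProduct] using this.symm

theorem exists_eq_mul_right_of_rank_mul_eq [Fintype m] [DecidableEq n] {Z : Matrix m n K}
    {Q : Matrix n l K} (h : (Z * Q).rank = Z.rank) : ∃ N : Matrix l n K, Z = Z * Q * N := by
  apply exists_eq_mul_of_range_mulVecLin_le
  have hle : LinearMap.range (Z * Q).mulVecLin ≤ LinearMap.range Z.mulVecLin := by
    rw [mulVecLin_mul]; exact LinearMap.range_comp_le_range _ _
  exact (Submodule.eq_of_le_of_finrank_eq hle h).ge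

theorem exists_eq_mul_left_of_rank_mul_eq [Fintype m] [DecidableEq m] {Z : Matrix m n K}
    {P : Matrix l m K} (h : (P * Z).rank = Z.rank) : ∃ M : Matrix m l K, Z = M * (P * Z) := by
  obtain ⟨N, hN⟩ := exists_eq_mul_right_of_rank_mul_eq (Z := Zᵀ) (Q := Pᵀ)
    (by rw [← transpose_mul, rank_transpose, rank_transpose, h])
  exact ⟨Nᵀ, by simpa only [transpose_transpose, transpose_mul] using congrArg transpose hN⟩

theorem eq_mul_mul_mul_of_rank_eq [Fintype m] [DecidableEq m] [DecidableEq n] {Z : Matrix m n K}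
    {P : Matrix l m K} {Q : Matrix n l K} {G : Matrix l l K} (hr : (P * Z * Q).rank = Z.rank)
    (hG : P * Z * Q * G * (P * Z * Q) = P * Z * Q) : Z = Z * Q * G * (P * Z) := by
  have hPZ : (P * Z).rank = Z.rank :=
    le_antisymm (rank_mul_le_right P Z) (hr ▸ rank_mul_le_left (P * Z) Q)
  have hZQ : (Z * Q).rank = Z.rank :=
    le_antisymm (rank_mul_le_left Z Q) (hr ▸ Matrix.mul_assoc P Z Q ▸ rank_mul_le_right P (Z * Q))
  obtain ⟨M, hM⟩ := exists_eq_mul_left_of_rank_mul_eq hPZ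
  obtain ⟨N, hN⟩ := exists_eq_mul_right_of_rank_mul_eq hZQ
  calc Z = M * (P * (Z * Q * N)) := by rw [← hN, ← hM]
  _ = M * (P * Z * Q * G * (P * Z * Q)) * N := by rw [hG]; simp only [Matrix.mul_assoc]
  _ = M * (P * Z) * Q * G * (P * (Z * Q * N)) := by simp only [Matrix.mul_assoc]
  _ = Z * Q * G * (P * Z) := by rw [← hM, ← hN]

end Factorization

section TangentCone

variable {ι : Type*} [Fintype ι] [DecidableEq ι]

theorem sub_mul_mul_sub_eq_of_rank_add_eq {Y Yp D : Matrix ι ι ℝ} (hYp : Y * Yp * Y = Y)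
    (hS : IsUnit (1 + Yp * D * (Yp * Y)).det) (hD : (Y + D).rank = Y.rank) :
    (1 - Y * Yp) * D * (1 - Yp * Y) =
      (1 - Y * Yp) * D * (Yp * Y) * ((1 + Yp * D * (Yp * Y))⁻¹ * Yp) *
        (Y * Yp * D * (1 - Yp * Y)) := by
  set S := 1 + Yp * D * (Yp * Y)
  have hPZQ : Y * Yp * (Y + D) * (Yp * Y) = Y * S := by
    simp only [S, Matrix.mul_add, Matrix.add_mul, Matrix.mul_one, hYp, ← Matrix.mul_assoc]
  have hG : Y * S * (S⁻¹ * Yp) * (Y * S) = Y * S := by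
    rw [show Y * S * (S⁻¹ * Yp) * (Y * S) = Y * (S * S⁻¹) * Yp * Y * S by
      simp only [Matrix.mul_assoc], mul_nonsing_inv S hS, Matrix.mul_one, hYp]
  have hfactor := eq_mul_mul_mul_of_rank_eq (G := S⁻¹ * Yp)
    (by rw [hPZQ, rank_mul_eq_left_of_isUnit_det S Y hS, hD]) (by rw [hPZQ, hG])
  have hleft : (1 - Y * Yp) * (Y + D) = (1 - Y * Yp) * D := by
    rw [Matrix.mul_add, Matrix.sub_mul, Matrix.one_mul, hYp, sub_self, zero_add]
  have hright : (Y + D) * (1 - Yp * Y) = D * (1 - Yp * Y) := by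
    rw [Matrix.add_mul, Matrix.mul_sub, Matrix.mul_one, ← Matrix.mul_assoc, hYp, sub_self,
      zero_add]
  calc (1 - Y * Yp) * D * (1 - Yp * Y) = (1 - Y * Yp) * (Y + D) * (1 - Yp * Y) := by
        rw [hleft]
  _ = (1 - Y * Yp) * ((Y + D) * (Yp * Y) * (S⁻¹ * Yp) * (Y * Yp * (Y + D))) * (1 - Yp * Y) := by
        rw [← hfactor]
  _ = (1 - Y * Yp) * (Y + D) * (Yp * Y) * (S⁻¹ * Yp) * (Y * Yp * ((Y + D) * (1 - Yp * Y))) := by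
        simp only [Matrix.mul_assoc]
  _ = _ := by rw [hleft, hright, Matrix.mul_assoc (Y * Yp)]

theorem tangentConeAt_rank_eq_subset {Y Yp : Matrix ι ι ℝ} (hYp : Y * Yp * Y = Y) :
    tangentConeAt ℝ {Z | Z.rank = Y.rank} Y ⊆ {W | (1 - Y * Yp) * W * (1 - Yp * Y) = 0} := by
  intro W hW
  obtain ⟨α, l, hl, c, d, hd, hmem, hcd⟩ := exists_fun_of_mem_tangentConeAt hW
  set S := fun a => 1 + Yp * d a * (Yp * Y)
  have hS : Tendsto S l (𝓝 1) := by
    simpa using tendsto_const_nhds.add ((tendsto_const_nhds.mul hd).mul tendsto_const_nhds)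
  have hSinv : Tendsto (fun a => (S a)⁻¹) l (𝓝 1) := by
    have := (continuousAt_matrix_inv (1 : Matrix ι ι ℝ) (by simp)).tendsto.comp hS
    rwa [inv_one] at this
  have hlim : Tendsto (fun a => c a • ((1 - Y * Yp) * d a * (1 - Yp * Y))) l
      (𝓝 ((1 - Y * Yp) * W * (1 - Yp * Y))) := by
    simpa only [Matrix.mul_smul, Matrix.smul_mul] using
      (tendsto_const_nhds.mul hcd).mul (tendsto_const_nhds (x := 1 - Yp * Y))
  have hquad : Tendsto (fun a => (1 - Y * Yp) * (c a • d a) * (Yp * Y) * ((S a)⁻¹ * Yp) *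
      (Y * Yp * d a * (1 - Yp * Y))) l (𝓝 0) := by
    simpa using ((((tendsto_const_nhds.mul hcd).mul tendsto_const_nhds).mul
      (hSinv.mul tendsto_const_nhds)).mul ((tendsto_const_nhds.mul hd).mul tendsto_const_nhds))
  have hlim0 : Tendsto (fun a => c a • ((1 - Y * Yp) * d a * (1 - Yp * Y))) l (𝓝 0) := by
    refine hquad.congr' ?_
    filter_upwards [hmem, eventually_isUnit_det_of_tendsto_one hS] with a ha hSa
    rw [sub_mul_mul_sub_eq_of_rank_add_eq hYp hSa ha]
    simp only [Matrix.mul_smul, Matrix.smul_mul]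
    rfl
  exact tendsto_nhds_unique hlim hlim0

end TangentCone

section MoorePenrose

variable {n : ℕ}

theorem transpose_mul_eq_of_mem_mprojSet_rank {k : ℕ} {X Y : Matrix (Fin n) (Fin n) ℝ}
    (hY : Y ∈ mprojSet {Z | Z.rank = k} X) : Yᵀ * X = Yᵀ * Y ∧ X * Yᵀ = Y * Yᵀ := by
  have hk : Y.rank = k := hY.1
  have hfirst : ∀ B, (∀ᶠ t in 𝓝 (0 : ℝ), (Y + t • B).rank = Y.rank) →
      trace (Bᵀ * (X - Y)) = 0 := fun B hB =>
    trace_transpose_mul_sub_eq_zero_of_mem_mprojSet hY (hB.mono fun _ ht => ht.trans hk)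
  set R := X - Y
  have hl : trace ((Yᵀ * R)ᵀ * (Yᵀ * R)) = 0 := by
    rw [← hfirst _ (eventually_rank_add_smul_self_mul Y (Yᵀ * R))]
    simp only [transpose_mul, transpose_transpose, Matrix.mul_assoc]
  have hr : trace ((Y * Rᵀ)ᵀ * (Y * Rᵀ)) = 0 := by
    rw [← hfirst _ (eventually_rank_add_smul_mul_self Y (R * Yᵀ))]
    simp only [transpose_mul, transpose_transpose, Matrix.mul_assoc]
    rw [trace_mul_comm]
    simp only [Matrix.mul_assoc]
  rw [trace_transpose_mul_self_eq_zero_iff] at hl hr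
  refine ⟨sub_eq_zero.mp (by rw [← Matrix.mul_sub]; exact hl), sub_eq_zero.mp ?_⟩
  rw [← Matrix.sub_mul]
  simpa using congrArg transpose hr

theorem IsMoorePenroseInv.transpose {A B : Matrix (Fin n) (Fin n) ℝ}
    (h : IsMoorePenroseInv A B) : IsMoorePenroseInv Aᵀ Bᵀ := by
  obtain ⟨h1, h2, h3, h4⟩ := h
  refine ⟨?_, ?_, ?_, ?_⟩
  · rw [← transpose_mul, ← transpose_mul, ← Matrix.mul_assoc, h1]
  · rw [← transpose_mul, ← transpose_mul, ← Matrix.mul_assoc, h2]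
  · rw [← transpose_mul, transpose_transpose, h4]
  · rw [← transpose_mul, transpose_transpose, h3]

theorem IsMoorePenroseInv.mul_eq_mul {X Xp Y Yp : Matrix (Fin n) (Fin n) ℝ}
    (hX : IsMoorePenroseInv X Xp) (hY : IsMoorePenroseInv Y Yp)
    (hl : Yᵀ * X = Yᵀ * Y) (hr : X * Yᵀ = Y * Yᵀ) : Y * Xp = Y * Yp := by
  obtain ⟨x1, -, x3, -⟩ := hX
  obtain ⟨y1, -, y3, y4⟩ := hY
  have hYYpX : Y * Yp * X = Y := by
    rw [← y3, transpose_mul, Matrix.mul_assoc, hl, ← Matrix.mul_assoc, ← transpose_mul, y3, y1]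
  have hXYpY : X * Yp * Y = Y := by
    rw [Matrix.mul_assoc, ← y4, transpose_mul, ← Matrix.mul_assoc, hr, Matrix.mul_assoc,
      ← transpose_mul, y4, ← Matrix.mul_assoc, y1]
  have hXXpY : X * Xp * Y = Y := by
    rw [← hXYpY, ← Matrix.mul_assoc, ← Matrix.mul_assoc, x1]
  have hYXp : Y * Xp = Y * Yp * (X * Xp) := by
    rw [← Matrix.mul_assoc, hYYpX]
  rw [← transpose_transpose (Y * Xp), hYXp, transpose_mul, x3, y3, ← Matrix.mul_assoc, hXXpY, y3]

theorem trace_transpose_mul_transpose_eq_zero {Y Yp E W : Matrix (Fin n) (Fin n) ℝ}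
    (hYp : Y * Yp * Y = Y) (hW : W ∈ matTangentSp {Z | Z.rank = Y.rank} Y)
    (hEY : E * Y = 0) (hYE : Y * E = 0) : trace (Wᵀ * Eᵀ) = 0 := by
  have hW' : (1 - Y * Yp) * W * (1 - Yp * Y) = 0 :=
    Submodule.span_le (p := LinearMap.ker (LinearMap.mulLeftRight ℝ (1 - Y * Yp, 1 - Yp * Y)))
      |>.mpr (tangentConeAt_rank_eq_subset hYp) hW
  have hE : (1 - Yp * Y) * E * (1 - Y * Yp) = E := by
    simp [Matrix.sub_mul, Matrix.mul_sub, Matrix.mul_assoc, hYE, ← Matrix.mul_assoc E, hEY]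
  calc trace (Wᵀ * Eᵀ) = trace (E * W) := by rw [← transpose_mul, trace_transpose]
  _ = trace ((1 - Yp * Y) * (E * ((1 - Y * Yp) * W))) := by
      conv_lhs => rw [← hE]
      simp only [Matrix.mul_assoc]
  _ = trace (E * ((1 - Y * Yp) * W * (1 - Yp * Y))) := by
      rw [trace_mul_comm]; simp only [Matrix.mul_assoc]
  _ = 0 := by rw [hW', Matrix.mul_zero, trace_zero]

end MoorePenrose

theorem proj_moore_penrose_onto_tangent_general
    (n : ℕ) (k : ℕ)
    (X Y Xp Yp : Matrix (Fin n) (Fin n) ℝ)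
    (hY : mprojSet {Z : Matrix (Fin n) (Fin n) ℝ | Z.rank = k} X = {Y})
    (hXp : IsMoorePenroseInv X Xp) (hYp : IsMoorePenroseInv Y Yp) :
    Ypᵀ ∈ matTangentSp {Z : Matrix (Fin n) (Fin n) ℝ | Z.rank = k} Y ∧
      ∀ W ∈ matTangentSp {Z : Matrix (Fin n) (Fin n) ℝ | Z.rank = k} Y,
        Matrix.trace (Wᵀ * (Xpᵀ - Ypᵀ)) = 0 := by
  have hYmem : Y ∈ mprojSet {Z : Matrix (Fin n) (Fin n) ℝ | Z.rank = k} X := hY ▸ rfl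
  obtain ⟨hl, hr⟩ := transpose_mul_eq_of_mem_mprojSet_rank hYmem
  obtain rfl : Y.rank = k := hYmem.1
  have hYXp : Y * Xp = Y * Yp := hXp.mul_eq_mul hYp hl hr
  have hXpY : Xp * Y = Yp * Y := by
    have := hXp.transpose.mul_eq_mul hYp.transpose
      (by simpa only [transpose_mul, transpose_transpose] using congrArg transpose hr)
      (by simpa only [transpose_mul, transpose_transpose] using congrArg transpose hl)
    simpa only [transpose_mul, transpose_transpose] using congrArg transpose this
  refine ⟨Submodule.subset_span ?_, fun W hW => ?_⟩
  · have hYpT : Y * (Yp * Ypᵀ) = Ypᵀ := by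
      rw [← Matrix.mul_assoc, ← hYp.2.2.1, ← transpose_mul, ← Matrix.mul_assoc, hYp.2.1]
    simpa only [hYpT] using mul_mem_tangentConeAt_rank_eq Y (Yp * Ypᵀ)
  · rw [← transpose_sub]
    exact trace_transpose_mul_transpose_eq_zero hYp.1 hW (by rw [Matrix.sub_mul, hXpY, sub_self])
      (by rw [Matrix.mul_sub, hYXp, sub_self])

/-- **Projection of the (transposed) Moore–Penrose inverse onto the tangent space.**
The conclusion states that `Ypᵀ` is the orthogonal projection of `Xpᵀ` onto `T_Y M_k`
with respect to the trace inner product: it lies in the tangent space, and the difference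
is orthogonal to the tangent space. -/
theorem proj_moore_penrose_onto_tangent
    (n : ℕ) (hn : 1 ≤ n) (k : ℕ) (hk : k ≤ n)
    (X Y Xp Yp : Matrix (Fin n) (Fin n) ℝ)
    (hY : mprojSet {Z : Matrix (Fin n) (Fin n) ℝ | Z.rank = k} X = {Y})
    (hXp : IsMoorePenroseInv X Xp) (hYp : IsMoorePenroseInv Y Yp) :
    Ypᵀ ∈ matTangentSp {Z : Matrix (Fin n) (Fin n) ℝ | Z.rank = k} Y ∧
      ∀ W ∈ matTangentSp {Z : Matrix (Fin n) (Fin n) ℝ | Z.rank = k} Y,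
        Matrix.trace (Wᵀ * (Xpᵀ - Ypᵀ)) = 0 :=
  proj_moore_penrose_onto_tangent_general n k X Y Xp Yp hY hXp hYp
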